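/- arXiv:1708.09080 — 4 statements merged into one kernel-verified Lean document; each statement's English description precedes it below -/
import Mathlib

section
/- For every integer d ≥ 1 and every integer N ≥ 1, there exists a recoloring algorithm A on the vertex set V = {1,…,N} such that for every update sequence G₀, G₁, …, G_m: (i) every coloring produced by A takes values in {1, …, (1 + d·(⌈N^{1/d}⌉ − 1))·C}, where C = max_{0 ≤ t ≤ m} χ(G_t); and (ii) the total number of recolorings performed over the m updates is at most (d + 2)·m. In particular, the algorithm is O(d·N^{1/d})-competitive and performs O(d) amortized vertex recolorings per update. -/
/-- `H` is obtained from `G` by inserting or deleting exactly one edge. -/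
def isStep {V : Type*} (G H : SimpleGraph V) : Prop :=
  ∃ u v : V, u ≠ v ∧
    ((¬ G.Adj u v ∧ H = G ⊔ SimpleGraph.fromEdgeSet {s(u, v)}) ∨
     (G.Adj u v ∧ H = G \ SimpleGraph.fromEdgeSet {s(u, v)}))

/-- `f` is a proper (ℕ-valued) coloring of `G`. -/
def IsProperNat {V : Type*} (G : SimpleGraph V) (f : V → ℕ) : Prop :=
  ∀ ⦃u v⦄, G.Adj u v → f u ≠ f v

/-- Number of vertices on which the colorings `f` and `g` differ. -/
def recount {N : ℕ} (f g : Fin N → ℕ) : ℕ :=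
  (Finset.univ.filter fun v => f v ≠ g v).card

/-!
Each vertex sits in a bucket and carries a local color, taken from an optimal coloring of the
graph at the moment it entered the bucket; buckets use disjoint palettes, so with
`k = ⌈N^{1/d}⌉ - 1` low buckets on each of the levels `0, …, d - 1` plus one top bucket, at
most `(1 + d k) C` colors occur. When an update creates a monochromatic edge at `u`, the vertex
`u` and all vertices of level below the least level `i` having an empty bucket move into that
bucket and are recolored; if no low bucket is empty, everything is reset into the top bucket.

The potential `∑ (k + 1)^j` over occupied buckets of level `j`, plus `∑ (d - 1 - j)` over
vertices at level `j < d`, pays for the recolorings. A low reset empties the buckets of levels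
below `i`, of total weight `(k + 1)^i - 1`, and fills one of weight `(k + 1)^i`, while every
moved vertex other than `u` loses at least one unit of `d - 1 - j`. A top reset recolors at
most `N ≤ (k + 1)^d` vertices, but happens only when all low buckets, of total weight
`(k + 1)^d - 1`, are occupied. So each update costs at most `d + 1` amortized recolorings.
-/

open Finset

lemma Nat.eq_and_eq_of_add_mul_eq {n a a' c c' : ℕ} (ha : a < n) (ha' : a' < n)
    (h : a + n * c = a' + n * c') : a = a' ∧ c = c' := by
  have hn : 0 < n := by omega
  obtain ⟨h1, h2⟩ := (Nat.div_mod_unique hn).2 ⟨h, ha⟩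
  obtain ⟨h3, h4⟩ := (Nat.div_mod_unique hn).2 ⟨rfl, ha'⟩
  exact ⟨h2.symm.trans h4, h1.symm.trans h3⟩

lemma le_ceil_rpow_one_div_pow {x : ℝ} (hx : 0 ≤ x) {d : ℕ} (hd : d ≠ 0) :
    x ≤ (⌈x ^ ((1 : ℝ) / d)⌉₊ : ℝ) ^ d := by
  calc x = (x ^ ((1 : ℝ) / d)) ^ d := by rw [one_div, Real.rpow_inv_natCast_pow hx hd]
    _ ≤ _ := by gcongr; exact Nat.le_ceil _

lemma sum_le_of_potential {a Φ : ℕ → ℕ} {c m : ℕ} (h : ∀ t < m, a t + Φ (t + 1) ≤ Φ t + c) :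
    ∑ t ∈ range m, a t + Φ m ≤ Φ 0 + c * m := by
  induction m with
  | zero => simp
  | succ m ih =>
    have := ih fun t ht => h t (by omega)
    have := h m (by omega)
    rw [sum_range_succ, mul_add_one]
    omega

lemma SimpleGraph.exists_forall_mono_adj_eq_of_isStep {V : Type*} {G H : SimpleGraph V}
    {f : V → ℕ} (hGH : isStep G H) (hf : IsProperNat G f) :
    ∃ e : Sym2 V, ∀ ⦃x y⦄, H.Adj x y → f x = f y → s(x, y) = e := by
  obtain ⟨a, b, -, ⟨-, rfl⟩ | ⟨-, rfl⟩⟩ := hGH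
  · refine ⟨s(a, b), fun x y hxy hfxy => ?_⟩
    rcases hxy with hxy | hxy
    · exact absurd hfxy (hf hxy)
    · exact hxy.1
  · exact ⟨s(a, b), fun x y hxy hfxy => absurd hfxy (hf hxy.1)⟩

namespace SmallBuckets

/-- `none` is the top bucket, of level `d`; `some (j, c)` is the `c`-th of the `k` buckets of
level `j < d`. -/
abbrev Bucket (d k : ℕ) := Option (Fin d × Fin k)

variable {V : Type*} {d k : ℕ}

def level : Bucket d k → ℕ
  | none => d
  | some p => p.1

def slack : Bucket d k → ℕ
  | none => 0
  | some p => d - 1 - p.1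

def weight : Bucket d k → ℕ
  | none => 0
  | some p => (k + 1) ^ (p.1 : ℕ)

@[simp] lemma level_none : level (none : Bucket d k) = d := rfl
@[simp] lemma level_some (p : Fin d × Fin k) : level (some p) = p.1 := rfl
@[simp] lemma slack_none : slack (none : Bucket d k) = 0 := rfl
@[simp] lemma slack_some (p : Fin d × Fin k) : slack (some p) = d - 1 - p.1 := rfl
@[simp] lemma weight_none : weight (none : Bucket d k) = 0 := rfl
@[simp] lemma weight_some (p : Fin d × Fin k) : weight (some p) = (k + 1) ^ (p.1 : ℕ) := rfl

noncomputable def index (b : Bucket d k) : ℕ := Fintype.equivFin (Bucket d k) b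

lemma index_lt (b : Bucket d k) : index b < 1 + d * k :=
  (Fin.isLt _).trans_eq (by simp [add_comm])

lemma index_injective : Function.Injective (index : Bucket d k → ℕ) :=
  Fin.val_injective.comp (Fintype.equivFin _).injective

lemma sum_weight_level_lt {i : ℕ} (hi : i ≤ d) :
    ∑ b ∈ univ.filter (fun b : Bucket d k => level b < i), weight b + 1 = (k + 1) ^ i := by
  have hsum : ∑ b ∈ univ.filter (fun b : Bucket d k => level b < i), weight b
      = (∑ j ∈ range i, (k + 1) ^ j) * k := by
    have hlow : univ.filter (fun b : Bucket d k => level b < i)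
        = ((univ.filter fun j : Fin d => (j : ℕ) < i) ×ˢ univ).map .some := by
      ext (_ | p) <;> simp [not_lt.2 hi]
    have hrange : (univ.filter fun j : Fin d => (j : ℕ) < i).map Fin.valEmbedding = range i := by
      ext j; simp only [mem_map, mem_filter, mem_univ, true_and, Fin.valEmbedding_apply, mem_range]
      exact ⟨by rintro ⟨j, hj, rfl⟩; exact hj, fun hj => ⟨⟨j, by omega⟩, hj, rfl⟩⟩
    rw [hlow, sum_map, sum_product, ← hrange, sum_map, sum_mul]
    simp [mul_comm]
  rw [hsum, geom_sum_mul_add]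

structure State (V : Type*) (d k : ℕ) where
  bucket : V → Bucket d k
  localColor : V → ℕ

namespace State

noncomputable def color (σ : State V d k) (v : V) : ℕ :=
  1 + index (σ.bucket v) + (1 + d * k) * σ.localColor v

lemma color_eq_color_iff (σ : State V d k) {x y : V} :
    σ.color x = σ.color y ↔ σ.bucket x = σ.bucket y ∧ σ.localColor x = σ.localColor y := by
  refine ⟨fun h => ?_, fun h => by simp only [color, h.1, h.2]⟩
  obtain ⟨hb, hl⟩ := Nat.eq_and_eq_of_add_mul_eq (c := σ.localColor x) (c' := σ.localColor y)
    (index_lt (σ.bucket x)) (index_lt (σ.bucket y)) (by simp only [color] at h; omega)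
  exact ⟨index_injective hb, hl⟩

lemma one_le_color (σ : State V d k) (v : V) : 1 ≤ σ.color v := by
  simp only [color]; omega

lemma color_le (σ : State V d k) (v : V) :
    σ.color v ≤ (1 + d * k) * (σ.localColor v + 1) := by
  have := index_lt (σ.bucket v)
  simp only [color]
  rw [mul_add_one]
  omega

end State

noncomputable def optimalColoring [Finite V] (G : SimpleGraph V) (v : V) : ℕ :=
  G.colorable_chromaticNumber_of_fintype.some v

lemma optimalColoring_lt [Finite V] (G : SimpleGraph V) (v : V) :
    optimalColoring G v < G.chromaticNumber.toNat :=
  (G.colorable_chromaticNumber_of_fintype.some v).isLt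

lemma optimalColoring_ne [Finite V] {G : SimpleGraph V} {x y : V} (h : G.Adj x y) :
    optimalColoring G x ≠ optimalColoring G y :=
  fun hxy => G.colorable_chromaticNumber_of_fintype.some.valid h (Fin.val_injective hxy)

namespace State

def init : State V d k := ⟨fun _ => none, fun _ => 0⟩

noncomputable def resetTop [Finite V] (G : SimpleGraph V) : State V d k :=
  ⟨fun _ => none, optimalColoring G⟩

noncomputable def resetLow [Finite V] [DecidableEq V] (σ : State V d k) (G : SimpleGraph V)
    (u : V) (p : Fin d × Fin k) : State V d k where
  bucket v := if v = u ∨ level (σ.bucket v) < p.1 then some p else σ.bucket v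
  localColor v := if v = u ∨ level (σ.bucket v) < p.1 then optimalColoring G v else σ.localColor v

end State

open State

/-- One update of the algorithm, as a relation: the endpoint `u` of a monochromatic edge and the
empty bucket `p` of least level are left free. -/
inductive Transition [Finite V] [DecidableEq V] (G : SimpleGraph V) :
    State V d k → State V d k → Prop
  | keep {σ : State V d k} : IsProperNat G σ.color → Transition G σ σ
  | low {σ : State V d k} {u w : V} (p : Fin d × Fin k) : G.Adj u w → σ.color u = σ.color w →
      some p ∉ Set.range σ.bucket → (∀ b : Bucket d k, level b < p.1 → b ∈ Set.range σ.bucket) →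
      Transition G σ (σ.resetLow G u p)
  | top {σ : State V d k} {u w : V} : G.Adj u w → σ.color u = σ.color w →
      (∀ b : Bucket d k, level b < d → b ∈ Set.range σ.bucket) → Transition G σ (resetTop G)

section Algorithm

variable [Finite V] [DecidableEq V]

lemma exists_transition (G : SimpleGraph V) (σ : State V d k) : ∃ σ', Transition G σ σ' := by
  classical
  by_cases hp : IsProperNat G σ.color
  · exact ⟨σ, .keep hp⟩
  obtain ⟨u, w, huw, hc⟩ : ∃ u w, G.Adj u w ∧ σ.color u = σ.color w := by
    simpa [IsProperNat] using hp
  by_cases hfull : ∀ b : Bucket d k, level b < d → b ∈ Set.range σ.bucket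
  · exact ⟨_, .top huw hc hfull⟩
  obtain ⟨p, hp, hmin⟩ := exists_min_image (univ.filter fun p => some p ∉ Set.range σ.bucket)
    (fun p : Fin d × Fin k => (p.1 : ℕ)) <| by
      simp only [not_forall] at hfull
      obtain ⟨b | p, hb, hp⟩ := hfull
      · exact absurd hb (lt_irrefl d)
      · exact ⟨p, mem_filter.2 ⟨mem_univ _, hp⟩⟩
  refine ⟨_, .low p huw hc (mem_filter.1 hp).2 fun b hb => ?_⟩
  by_contra hbσ
  match b, hb, hbσ with
  | none, hb, _ => exact absurd (hb.trans p.1.isLt) (lt_irrefl d)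
  | some q, hb, hq => exact absurd (hmin q (mem_filter.2 ⟨mem_univ _, hq⟩)) (not_le.2 hb)

noncomputable def next (G : SimpleGraph V) (σ : State V d k) : State V d k :=
  (exists_transition G σ).choose

lemma transition_next (G : SimpleGraph V) (σ : State V d k) : Transition G σ (next G σ) :=
  (exists_transition G σ).choose_spec

noncomputable def run (Gs : List (SimpleGraph V)) : State V d k :=
  Gs.foldl (fun σ G => next G σ) init

namespace Transition

variable {G : SimpleGraph V} {σ σ' : State V d k}

lemma isProperNat {G₀ : SimpleGraph V} (h : Transition G σ σ') (hG : isStep G₀ G)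
    (hσ : IsProperNat G₀ σ.color) : IsProperNat G σ'.color := by
  cases h with
  | keep hp => exact hp
  | top _ _ _ =>
    intro x y hxy hc
    exact optimalColoring_ne hxy ((color_eq_color_iff _).1 hc).2
  | @low u w p huw hcu hp _ =>
    obtain ⟨e, he⟩ := SimpleGraph.exists_forall_mono_adj_eq_of_isStep hG hσ
    intro x y hxy hc
    obtain ⟨hb, hl⟩ := (color_eq_color_iff _).1 hc
    simp only [resetLow] at hb hl
    split_ifs at hb hl with hx hy hy
    · exact optimalColoring_ne hxy hl
    · exact hp ⟨y, hb.symm⟩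
    · exact hp ⟨x, hb⟩
    · have hxy' : s(x, y) = s(u, w) :=
        (he hxy (by simp only [color, hb, hl])).trans (he huw hcu).symm
      rcases Sym2.mem_iff.1 (hxy' ▸ Sym2.mem_mk_left u w) with rfl | rfl
      · exact hx (Or.inl rfl)
      · exact hy (Or.inl rfl)

lemma localColor_eq_or (h : Transition G σ σ') (v : V) :
    σ'.localColor v = σ.localColor v ∨ σ'.localColor v = optimalColoring G v := by
  cases h with
  | keep => exact Or.inl rfl
  | top => exact Or.inr rfl
  | low =>
    simp only [resetLow]
    split_ifs
    · exact Or.inr rfl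
    · exact Or.inl rfl

end Transition

end Algorithm

section Potential

variable [Fintype V]

namespace State

def potential (σ : State V d k) : ℕ :=
  ∑ b ∈ univ.image σ.bucket, weight b + ∑ v, slack (σ.bucket v)

lemma potential_of_forall_bucket_eq_none {σ : State V d k} (h : ∀ v, σ.bucket v = none) :
    σ.potential = 0 := by
  have hw : ∀ b ∈ univ.image σ.bucket, weight b = 0 := by
    simp only [mem_image, mem_univ, true_and, forall_exists_index, forall_apply_eq_imp_iff, h,
      weight_none, implies_true]
  simp [potential, sum_eq_zero hw, h]

lemma pow_le_sum_weight_add_one {σ : State V d k} {i : ℕ} (hi : i ≤ d)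
    (hfull : ∀ b : Bucket d k, level b < i → b ∈ Set.range σ.bucket) :
    (k + 1) ^ i ≤ ∑ b ∈ univ.image σ.bucket, weight b + 1 := by
  rw [← sum_weight_level_lt hi]
  gcongr
  intro b hb
  obtain ⟨v, rfl⟩ := hfull b (mem_filter.1 hb).2
  exact mem_image_of_mem _ (mem_univ v)

variable [DecidableEq V] {σ : State V d k} {G : SimpleGraph V} {u : V} {p : Fin d × Fin k}

lemma card_color_ne_resetLow_le :
    #{v | σ.color v ≠ (σ.resetLow G u p).color v} ≤ #{v | v = u ∨ level (σ.bucket v) < p.1} := by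
  refine card_le_card fun v => ?_
  simp only [mem_filter, mem_univ, true_and]
  contrapose
  intro hv
  simp only [color, resetLow, if_neg hv]

lemma sum_slack_resetLow_add_card_le :
    ∑ v, slack ((σ.resetLow G u p).bucket v) + #{v | v = u ∨ level (σ.bucket v) < p.1}
      ≤ ∑ v, slack (σ.bucket v) + d := by
  have hv : ∀ v, slack ((σ.resetLow G u p).bucket v)
      + (if v = u ∨ level (σ.bucket v) < p.1 then 1 else 0)
      ≤ slack (σ.bucket v) + if v = u then d else 0 := by
    intro v
    have hpd := p.1.isLt
    by_cases hmv : v = u ∨ level (σ.bucket v) < p.1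
    · simp only [resetLow, if_pos hmv, slack_some]
      by_cases hvu : v = u
      · simp only [if_pos hvu]
        omega
      · obtain ⟨q, hq⟩ : ∃ q, σ.bucket v = some q := by
          cases hb : σ.bucket v with
          | none => simp only [hb, level_none, hvu, false_or] at hmv; omega
          | some q => exact ⟨q, rfl⟩
        simp only [hq, level_some, hvu, false_or, slack_some, if_false] at hmv ⊢
        omega
    · simp [resetLow, hmv]
  calc ∑ v, slack ((σ.resetLow G u p).bucket v) + #{v | v = u ∨ level (σ.bucket v) < p.1}
      = ∑ v, (slack ((σ.resetLow G u p).bucket v)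
          + if v = u ∨ level (σ.bucket v) < p.1 then 1 else 0) := by
        rw [sum_add_distrib, sum_boole, Nat.cast_id]
    _ ≤ ∑ v, (slack (σ.bucket v) + if v = u then d else 0) := sum_le_sum fun v _ => hv v
    _ = ∑ v, slack (σ.bucket v) + d := by simp [sum_add_distrib]

lemma sum_weight_resetLow_le (hp : some p ∉ Set.range σ.bucket)
    (hfull : ∀ b : Bucket d k, level b < p.1 → b ∈ Set.range σ.bucket) :
    ∑ b ∈ univ.image (σ.resetLow G u p).bucket, weight b
      ≤ ∑ b ∈ univ.image σ.bucket, weight b + 1 := by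
  have hL := sum_weight_level_lt (k := k) p.1.isLt.le
  set L := univ.filter fun b : Bucket d k => level b < p.1
  have hLI : L ⊆ univ.image σ.bucket := fun b hb => by
    obtain ⟨v, rfl⟩ := hfull b (mem_filter.1 hb).2
    exact mem_image_of_mem _ (mem_univ v)
  have hsub : univ.image (σ.resetLow G u p).bucket ⊆ insert (some p) (univ.image σ.bucket \ L) := by
    intro b hb
    obtain ⟨v, -, rfl⟩ := mem_image.1 hb
    simp only [resetLow]
    split_ifs with hv
    · exact mem_insert_self _ _
    · refine mem_insert_of_mem (mem_sdiff.2 ⟨mem_image_of_mem _ (mem_univ v), ?_⟩)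
      simp only [L, mem_filter, mem_univ, true_and]
      exact fun h => hv (Or.inr h)
  have hpI : some p ∉ univ.image σ.bucket \ L := fun h =>
    hp (by simpa using (mem_sdiff.1 h).1)
  have hIL := sum_sdiff hLI (f := weight)
  calc ∑ b ∈ univ.image (σ.resetLow G u p).bucket, weight b
      ≤ ∑ b ∈ insert (some p) (univ.image σ.bucket \ L), weight b := sum_le_sum_of_subset hsub
    _ = (k + 1) ^ (p.1 : ℕ) + ∑ b ∈ univ.image σ.bucket \ L, weight b := by
        rw [sum_insert hpI, weight_some]
    _ ≤ _ := by omega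

end State

lemma Transition.card_color_ne_add_potential_le [DecidableEq V] {G : SimpleGraph V}
    {σ σ' : State V d k} (hV : Fintype.card V ≤ (k + 1) ^ d) (h : Transition G σ σ') :
    #{v | σ.color v ≠ σ'.color v} + σ'.potential ≤ σ.potential + (d + 1) := by
  cases h with
  | keep => simp
  | top _ _ hfull =>
    have hcard : #{v | σ.color v ≠ (resetTop G : State V d k).color v} ≤ Fintype.card V :=
      card_le_univ _
    have hweight := pow_le_sum_weight_add_one le_rfl hfull
    rw [potential_of_forall_bucket_eq_none fun _ => rfl, potential]
    omega
  | @low u _ p _ _ hp hfull =>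
    have hcard := card_color_ne_resetLow_le (σ := σ) (G := G) (u := u) (p := p)
    have hslack := sum_slack_resetLow_add_card_le (σ := σ) (G := G) (u := u) (p := p)
    have hweight := sum_weight_resetLow_le (G := G) (u := u) hp hfull
    simp only [potential]
    omega

end Potential

section Run

variable [Finite V] [DecidableEq V] {G : SimpleGraph V}

lemma Transition.eq_of_isProperNat {σ σ' : State V d k} (h : Transition G σ σ')
    (hσ : IsProperNat G σ.color) : σ' = σ := by
  cases h with
  | keep => rfl
  | low _ huw hc => exact absurd hc (hσ huw)
  | top huw hc => exact absurd hc (hσ huw)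

lemma run_map_range_one {G : ℕ → SimpleGraph V}
    (hG : IsProperNat (G 0) (init : State V d k).color) :
    run ((List.range 1).map G) = (init : State V d k) :=
  (transition_next _ _).eq_of_isProperNat hG

lemma transition_run_map_range (G : ℕ → SimpleGraph V) (t : ℕ) :
    Transition (G (t + 1)) (run ((List.range (t + 1)).map G) : State V d k)
      (run ((List.range (t + 2)).map G)) := by
  unfold run
  rw [List.range_succ (n := t + 1), List.map_append, List.foldl_append]
  exact transition_next _ _

end Run

section Chain

variable {G : ℕ → SimpleGraph V} {σ : ℕ → State V d k}

lemma isProperNat_of_chain [Finite V] [DecidableEq V] {m : ℕ}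
    (hσ : ∀ t, Transition (G (t + 1)) (σ t) (σ (t + 1))) (hG : ∀ t < m, isStep (G t) (G (t + 1)))
    (h0 : IsProperNat (G 0) (σ 0).color) : ∀ t ≤ m, IsProperNat (G t) (σ t).color := by
  intro t ht
  induction t with
  | zero => exact h0
  | succ t ih => exact (hσ t).isProperNat (hG t (by omega)) (ih (by omega))

lemma localColor_lt_of_chain [Finite V] [DecidableEq V] {m C : ℕ}
    (hσ : ∀ t, Transition (G (t + 1)) (σ t) (σ (t + 1)))
    (hC : ∀ t ≤ m, (G t).chromaticNumber.toNat ≤ C) (h0 : ∀ v, (σ 0).localColor v < C) :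
    ∀ t ≤ m, ∀ v, (σ t).localColor v < C := by
  intro t ht v
  induction t with
  | zero => exact h0 v
  | succ t ih =>
    rcases (hσ t).localColor_eq_or v with h | h
    · exact h ▸ ih (by omega)
    · exact h ▸ (optimalColoring_lt _ v).trans_le (hC _ ht)

lemma sum_card_color_ne_le_of_chain [Fintype V] [DecidableEq V] {m : ℕ}
    (hV : Fintype.card V ≤ (k + 1) ^ d) (hσ : ∀ t, Transition (G (t + 1)) (σ t) (σ (t + 1)))
    (h0 : (σ 0).potential = 0) :
    ∑ t ∈ range m, #{v | (σ t).color v ≠ (σ (t + 1)).color v} ≤ (d + 1) * m := by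
  have := sum_le_of_potential (m := m) (a := fun t => #{v | (σ t).color v ≠ (σ (t + 1)).color v})
    (Φ := fun t => (σ t).potential) fun t _ => (hσ t).card_color_ne_add_potential_le hV
  rw [h0] at this
  omega

end Chain

end SmallBuckets

open SmallBuckets State in
theorem smallBuckets_amortized_general (d N : ℕ) (hd : 1 ≤ d) :
    ∃ A : List (SimpleGraph (Fin N)) → (Fin N → ℕ),
      ∀ (m : ℕ) (G : ℕ → SimpleGraph (Fin N)),
        G 0 = ⊥ → (∀ t < m, isStep (G t) (G (t + 1))) →
        (∀ t ≤ m, IsProperNat (G t) (A ((List.range (t + 1)).map G))) ∧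
        (∀ t ≤ m, ∀ v : Fin N,
          1 ≤ A ((List.range (t + 1)).map G) v ∧
          A ((List.range (t + 1)).map G) v ≤
            (1 + d * (⌈(N : ℝ) ^ ((1 : ℝ) / d)⌉₊ - 1)) *
              ((Finset.range (m + 1)).sup fun t => ((G t).chromaticNumber).toNat)) ∧
        (∑ t ∈ Finset.range m,
            recount (A ((List.range (t + 1)).map G)) (A ((List.range (t + 2)).map G)))
          ≤ (d + 2) * m := by
  set k := ⌈(N : ℝ) ^ ((1 : ℝ) / d)⌉₊ - 1
  have hN : Fintype.card (Fin N) ≤ (k + 1) ^ d := by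
    have : N ≤ ⌈(N : ℝ) ^ ((1 : ℝ) / d)⌉₊ ^ d := by
      exact_mod_cast le_ceil_rpow_one_div_pow (Nat.cast_nonneg N) (by omega : d ≠ 0)
    exact (Fintype.card_fin N).trans_le (this.trans (Nat.pow_le_pow_left (by omega) d))
  refine ⟨fun Gs => (run Gs : State (Fin N) d k).color, fun m G hG0 hG => ?_⟩
  set σ : ℕ → State (Fin N) d k := fun t => run ((List.range (t + 1)).map G)
  set C := (Finset.range (m + 1)).sup fun t => (G t).chromaticNumber.toNat
  show (∀ t ≤ m, IsProperNat (G t) (σ t).color) ∧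
    (∀ t ≤ m, ∀ v, 1 ≤ (σ t).color v ∧ (σ t).color v ≤ (1 + d * k) * C) ∧
    ∑ t ∈ range m, recount (σ t).color (σ (t + 1)).color ≤ (d + 2) * m
  have hproper0 : IsProperNat (G 0) (init : State (Fin N) d k).color := fun x y h => by
    simp [hG0] at h
  have hσ0 : σ 0 = init := run_map_range_one hproper0
  have hσ : ∀ t, Transition (G (t + 1)) (σ t) (σ (t + 1)) := transition_run_map_range G
  have hC : ∀ t ≤ m, (G t).chromaticNumber.toNat ≤ C := fun t ht =>
    le_sup (f := fun t => (G t).chromaticNumber.toNat) (mem_range.2 (by omega))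
  have hloc := localColor_lt_of_chain hσ hC fun v =>
    hσ0 ▸ (Nat.zero_le _).trans_lt ((optimalColoring_lt (G 0) v).trans_le (hC 0 m.zero_le))
  refine ⟨isProperNat_of_chain hσ hG (hσ0 ▸ hproper0), fun t ht v =>
    ⟨one_le_color _ v, (color_le _ v).trans (Nat.mul_le_mul_left _ (hloc t ht v))⟩, ?_⟩
  calc _ ≤ (d + 1) * m :=
        sum_card_color_ne_le_of_chain hN hσ (hσ0 ▸ potential_of_forall_bucket_eq_none fun _ => rfl)
    _ ≤ (d + 2) * m := by gcongr; omega

/-- The small-buckets algorithm: an `O(d·N^{1/d})`-competitive recoloring algorithm with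
`O(d)` amortized recolorings per update. -/
theorem smallBuckets_amortized (d N : ℕ) (hd : 1 ≤ d) (hN : 1 ≤ N) :
    ∃ A : List (SimpleGraph (Fin N)) → (Fin N → ℕ),
      ∀ (m : ℕ) (G : ℕ → SimpleGraph (Fin N)),
        G 0 = ⊥ → (∀ t < m, isStep (G t) (G (t + 1))) →
        (∀ t ≤ m, IsProperNat (G t) (A ((List.range (t + 1)).map G))) ∧
        (∀ t ≤ m, ∀ v : Fin N,
          1 ≤ A ((List.range (t + 1)).map G) v ∧
          A ((List.range (t + 1)).map G) v ≤
            (1 + d * (⌈(N : ℝ) ^ ((1 : ℝ) / d)⌉₊ - 1)) *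
              ((Finset.range (m + 1)).sup fun t => ((G t).chromaticNumber).toNat)) ∧
        (∑ t ∈ Finset.range m,
            recount (A ((List.range (t + 1)).map G)) (A ((List.range (t + 2)).map G)))
          ≤ (d + 2) * m :=
  smallBuckets_amortized_general d N hd
end

section
/- For every integer d ≥ 1 and every integer N ≥ 1, there exists a recoloring algorithm A on the vertex set V = {1,…,N} such that for every update sequence G₀, G₁, …, G_m: (i) every coloring produced by A takes values in {1, …, (d + 1)·C}, where C = max_{0 ≤ t ≤ m} χ(G_t); and (ii) the total number of recolorings performed over the m updates is at most (d + 1)·⌈N^{1/d}⌉·m. In particular, the algorithm is O(d)-competitive and performs O(d·N^{1/d}) amortized vertex recolorings per update. -/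
/-!
Vertices live in buckets `1, …, d` of capacities `κ i = ⌈N^{i/d}⌉`, and bucket `i` owns the
colours `≡ i (mod d+1)`. When an update creates a monochromatic edge at `u`, take the least `i`
such that `u` together with buckets `1, …, i` fits into `κ i`, and move all of them into bucket `i`,
recoloured by an optimal colouring of the current graph. Distinct buckets use disjoint palettes,
so the result is proper and uses at most `(d+1)·χ` colours. By minimality of `i`, buckets
`1, …, i-1` together with `u` overflow `κ (i-1)`, so the at most `κ i ≤ κ 1 · κ (i-1)`
recolourings cost at most `κ 1` per vertex of that set. Each of these vertices except `u` moves up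
at least one bucket, and `u` moves down by less than `d`, so with the potential
`κ 1 · ∑ v, (d - bucket v)` every update costs at most `κ 1 · d` amortized recolourings.
-/

theorem Nat.ceil_mul_le_mul_ceil {α : Type*} [Semiring α] [LinearOrder α] [IsOrderedRing α]
    [FloorSemiring α] {x y : α} (hx : 0 ≤ x) (hy : 0 ≤ y) : ⌈x * y⌉₊ ≤ ⌈x⌉₊ * ⌈y⌉₊ :=
  Nat.ceil_le.2 <| by
    rw [Nat.cast_mul]
    exact mul_le_mul (Nat.le_ceil x) (Nat.le_ceil y) hy (hx.trans (Nat.le_ceil x))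

namespace BigBuckets

open Finset

theorem sum_le_of_amortized (a Φ : ℕ → ℕ) (c m : ℕ)
    (h : ∀ t < m, a t + Φ (t + 1) ≤ Φ t + c) :
    ∑ t ∈ range m, a t ≤ Φ 0 + c * m := by
  suffices ∀ j ≤ m, ∑ t ∈ range j, a t + Φ j ≤ Φ 0 + c * j from
    (Nat.le_add_right _ _).trans (this m le_rfl)
  intro j hj
  induction j with
  | zero => simp
  | succ j ih =>
    have := h j hj
    have := ih (by omega)
    rw [sum_range_succ, Nat.mul_succ]
    omega

variable {V : Type*}

/-- The colour `c (d+1) + j` puts its vertex into bucket `j`. -/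
def bucket (d : ℕ) (f : V → ℕ) (v : V) : ℕ := f v % (d + 1)

def InPalette (d C : ℕ) (f : V → ℕ) : Prop := ∀ v, bucket d f v ≠ 0 ∧ f v / (d + 1) < C

section Palette

variable {d C : ℕ} {f : V → ℕ}

theorem bucket_le (d : ℕ) (f : V → ℕ) (v : V) : bucket d f v ≤ d :=
  Nat.lt_succ_iff.mp (Nat.mod_lt _ d.succ_pos)

theorem InPalette.one_le (hf : InPalette d C f) (v : V) : 1 ≤ f v :=
  Nat.pos_of_ne_zero fun h => (hf v).1 (by simp [bucket, h])

theorem InPalette.le_mul (hf : InPalette d C f) (v : V) : f v ≤ (d + 1) * C := by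
  have h := (hf v).2
  have := Nat.div_add_mod (f v) (d + 1)
  have := bucket_le d f v
  unfold bucket at this
  nlinarith

end Palette

theorem isStep.eq_of_monochromatic {G H : SimpleGraph V} {f : V → ℕ} (h : isStep G H)
    (hf : IsProperNat G f) {x y x' y' : V} (hxy : H.Adj x y) (hfxy : f x = f y)
    (hxy' : H.Adj x' y') (hfxy' : f x' = f y') : s(x, y) = s(x', y') := by
  obtain ⟨a, b, -, ⟨-, rfl⟩ | ⟨-, rfl⟩⟩ := h
  · have key : ∀ {x y}, (G ⊔ SimpleGraph.fromEdgeSet {s(a, b)}).Adj x y → f x = f y →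
        s(x, y) = s(a, b) := by
      intro x y hxy hfxy
      simp only [SimpleGraph.sup_adj, SimpleGraph.fromEdgeSet_adj, Set.mem_singleton_iff] at hxy
      exact hxy.resolve_left (fun hG => hf hG hfxy) |>.1
    rw [key hxy hfxy, key hxy' hfxy']
  · exact absurd hfxy (hf ((SimpleGraph.sdiff_adj _ _ _ _).1 hxy).1)

variable [Fintype V]

def potential (d : ℕ) (f : V → ℕ) : ℕ := ∑ v, (d - bucket d f v)

noncomputable def optColoring (G : SimpleGraph V) : V → ℕ :=
  fun v => G.colorable_chromaticNumber_of_fintype.some v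

theorem optColoring_lt (G : SimpleGraph V) (v : V) :
    optColoring G v < G.chromaticNumber.toNat :=
  (G.colorable_chromaticNumber_of_fintype.some v).isLt

theorem isProperNat_optColoring (G : SimpleGraph V) : IsProperNat G (optColoring G) :=
  fun _ _ h e => G.colorable_chromaticNumber_of_fintype.some.valid h (Fin.ext e)

variable [DecidableEq V]

def bucketsUpTo (d : ℕ) (f : V → ℕ) (u : V) (i : ℕ) : Finset V :=
  insert u ({w | bucket d f w ≤ i} : Finset V)

def mergeInto (d : ℕ) (f g : V → ℕ) (u : V) (i : ℕ) : V → ℕ :=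
  fun w => if w ∈ bucketsUpTo d f u i then g w * (d + 1) + i else f w

section Merge

variable {d i : ℕ} {f g : V → ℕ} {u : V}

theorem mem_bucketsUpTo {w : V} : w ∈ bucketsUpTo d f u i ↔ w = u ∨ bucket d f w ≤ i := by
  simp [bucketsUpTo]

theorem bucket_mergeInto (hi : i ≤ d) (w : V) :
    bucket d (mergeInto d f g u i) w = if w ∈ bucketsUpTo d f u i then i else bucket d f w := by
  unfold bucket mergeInto
  split_ifs
  · rw [Nat.mul_add_mod_self_right, Nat.mod_eq_of_lt (by omega)]
  · rfl

theorem isProperNat_mergeInto {G : SimpleGraph V} (hi : i ≤ d) (hg : IsProperNat G g)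
    (hf : ∀ x y, G.Adj x y → f x = f y → x = u ∨ y = u) :
    IsProperNat G (mergeInto d f g u i) := by
  intro x y hxy hcol
  have hbucket : bucket d (mergeInto d f g u i) x = bucket d (mergeInto d f g u i) y := by
    rw [bucket, bucket, hcol]
  rw [bucket_mergeInto hi, bucket_mergeInto hi] at hbucket
  unfold mergeInto at hcol
  by_cases hx : x ∈ bucketsUpTo d f u i <;> by_cases hy : y ∈ bucketsUpTo d f u i <;>
    simp only [hx, hy, if_true, if_false] at hcol hbucket
  · exact hg hxy (Nat.eq_of_mul_eq_mul_right (by omega : 0 < d + 1) (by omega))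
  · exact hy (mem_bucketsUpTo.2 (Or.inr hbucket.ge))
  · exact hx (mem_bucketsUpTo.2 (Or.inr hbucket.le))
  · rcases hf x y hxy hcol with rfl | rfl
    · exact hx (mem_insert_self _ _)
    · exact hy (mem_insert_self _ _)

theorem card_ne_mergeInto_le :
    #{v | f v ≠ mergeInto d f g u i v} ≤ #(bucketsUpTo d f u i) :=
  card_le_card fun v hv => by
    by_contra hvS
    simp [mergeInto, hvS] at hv

theorem potential_mergeInto_add_card_le (hi1 : 1 ≤ i) (hid : i ≤ d) :
    potential d (mergeInto d f g u i) + #(bucketsUpTo d f u (i - 1)) ≤ potential d f + d := by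
  have key : ∑ v, ((d - bucket d (mergeInto d f g u i) v) +
        if v ∈ bucketsUpTo d f u (i - 1) then 1 else 0) ≤
      ∑ v, ((d - bucket d f v) + if v = u then d else 0) := by
    refine sum_le_sum fun v _ => ?_
    have := bucket_le d f v
    rw [bucket_mergeInto hid]
    by_cases hv : v = u
    · simp only [hv, mem_bucketsUpTo, true_or, if_true]
      omega
    · simp only [hv, mem_bucketsUpTo, false_or, if_false]
      split_ifs <;> omega
  simpa [potential, sum_add_distrib] using key

theorem inPalette_mergeInto {C : ℕ} (hf : InPalette d C f) (hg : ∀ v, g v < C)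
    (hi1 : 1 ≤ i) (hid : i ≤ d) : InPalette d C (mergeInto d f g u i) := by
  intro v
  refine ⟨by rw [bucket_mergeInto hid]; split_ifs <;> [omega; exact (hf v).1], ?_⟩
  unfold mergeInto
  split_ifs
  · rw [add_comm, Nat.add_mul_div_right _ _ d.succ_pos, Nat.div_eq_of_lt (by omega), zero_add]
    exact hg v
  · exact (hf v).2

end Merge

section Target

variable (κ : ℕ → ℕ) (d : ℕ) (f : V → ℕ) (u : V)

/-- The search runs over `j = i - 1` and is cut off at `i = d`, which makes it total. -/
def targetBucket : ℕ :=
  Nat.find (⟨d, Or.inl d.le_succ⟩ :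
    ∃ j, d ≤ j + 1 ∨ #(bucketsUpTo d f u (j + 1)) ≤ κ (j + 1)) + 1

theorem exists_targetBucket_eq : ∃ j, targetBucket κ d f u = j + 1 ∧
    (d ≤ j + 1 ∨ #(bucketsUpTo d f u (j + 1)) ≤ κ (j + 1)) ∧
    ∀ k < j, κ (k + 1) < #(bucketsUpTo d f u (k + 1)) ∧ k + 1 < d := by
  have h : ∃ j, d ≤ j + 1 ∨ #(bucketsUpTo d f u (j + 1)) ≤ κ (j + 1) := ⟨d, Or.inl d.le_succ⟩
  exact ⟨_, rfl, Nat.find_spec h, fun k hk => by simpa [and_comm] using Nat.find_min h hk⟩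

variable {κ d f u}

theorem targetBucket_le (hd : 1 ≤ d) : targetBucket κ d f u ≤ d := by
  obtain ⟨j, hj, -, hmin⟩ := exists_targetBucket_eq κ d f u
  by_contra! h
  have := (hmin (d - 1) (by omega)).2
  omega

theorem card_bucketsUpTo_targetBucket_le_mul (hd : 1 ≤ d) (hκd : Fintype.card V ≤ κ d)
    (hκ : ∀ i, κ (i + 1) ≤ κ 1 * κ i) :
    #(bucketsUpTo d f u (targetBucket κ d f u)) ≤
      κ 1 * #(bucketsUpTo d f u (targetBucket κ d f u - 1)) := by
  have hle := targetBucket_le (κ := κ) (f := f) (u := u) hd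
  obtain ⟨j, hj, hfit, hmin⟩ := exists_targetBucket_eq κ d f u
  rw [hj] at hle ⊢
  replace hfit : #(bucketsUpTo d f u (j + 1)) ≤ κ (j + 1) := hfit.elim (fun h => by
    rw [show j + 1 = d by omega]
    exact (card_le_univ _).trans hκd) id
  rw [Nat.add_sub_cancel]
  rcases j with _ | j
  · exact hfit.trans (Nat.le_mul_of_pos_right _ (card_pos.2 ⟨u, mem_insert_self _ _⟩))
  · exact hfit.trans ((hκ _).trans (Nat.mul_le_mul_left _ (hmin j j.lt_succ_self).1.le))

end Target

section Step

variable (κ : ℕ → ℕ) (d : ℕ)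

noncomputable def step (f : V → ℕ) (G : SimpleGraph V) : V → ℕ :=
  open Classical in
  if h : ∃ u w, G.Adj u w ∧ f u = f w then
    mergeInto d f (optColoring G) h.choose (targetBucket κ d f h.choose)
  else f

variable (f : V → ℕ) (G : SimpleGraph V)

theorem step_eq_or : (IsProperNat G f ∧ step κ d f G = f) ∨ ∃ u w, G.Adj u w ∧ f u = f w ∧
    step κ d f G = mergeInto d f (optColoring G) u (targetBucket κ d f u) := by
  unfold step
  split_ifs with h
  · obtain ⟨w, huw, hfuw⟩ := h.choose_spec
    exact Or.inr ⟨_, w, huw, hfuw, rfl⟩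
  · exact Or.inl ⟨fun u w huw hfuw => h ⟨u, w, huw, hfuw⟩, rfl⟩

variable {κ d f G}

theorem isProperNat_step (hd : 1 ≤ d) {G₀ : SimpleGraph V} (hf : IsProperNat G₀ f)
    (hG : isStep G₀ G) : IsProperNat G (step κ d f G) := by
  rcases step_eq_or κ d f G with ⟨hfG, h⟩ | ⟨u, w, huw, hfuw, h⟩
  · rwa [h]
  rw [h]
  refine isProperNat_mergeInto (targetBucket_le hd) (isProperNat_optColoring G)
    fun x y hxy hfxy => ?_
  rcases Sym2.eq_iff.1 (isStep.eq_of_monochromatic hG hf hxy hfxy huw hfuw) with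
    ⟨rfl, -⟩ | ⟨-, rfl⟩
  · exact Or.inl rfl
  · exact Or.inr rfl

theorem inPalette_step (hd : 1 ≤ d) {C : ℕ} (hf : InPalette d C f)
    (hχ : G.chromaticNumber.toNat ≤ C) : InPalette d C (step κ d f G) := by
  rcases step_eq_or κ d f G with ⟨-, h⟩ | ⟨u, -, -, -, h⟩ <;> rw [h]
  · exact hf
  · exact inPalette_mergeInto hf (fun v => (optColoring_lt G v).trans_le hχ)
      (Nat.le_add_left 1 _) (targetBucket_le hd)

theorem card_ne_step_add_potential_le (hd : 1 ≤ d) (hκd : Fintype.card V ≤ κ d)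
    (hκ : ∀ i, κ (i + 1) ≤ κ 1 * κ i) :
    #{v | f v ≠ step κ d f G v} + κ 1 * potential d (step κ d f G) ≤
      κ 1 * potential d f + κ 1 * d := by
  rcases step_eq_or κ d f G with ⟨-, h⟩ | ⟨u, -, -, -, h⟩ <;> rw [h]
  · simp
  set i := targetBucket κ d f u
  have hpot : potential d (mergeInto d f (optColoring G) u i) + #(bucketsUpTo d f u (i - 1)) ≤
      potential d f + d :=
    potential_mergeInto_add_card_le (Nat.le_add_left 1 _) (targetBucket_le hd)
  calc _ ≤ κ 1 * #(bucketsUpTo d f u (i - 1)) +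
          κ 1 * potential d (mergeInto d f (optColoring G) u i) := by
        gcongr
        exact card_ne_mergeInto_le.trans (card_bucketsUpTo_targetBucket_le_mul hd hκd hκ)
    _ ≤ κ 1 * potential d f + κ 1 * d := by
        rw [← mul_add, ← mul_add, add_comm]
        exact Nat.mul_le_mul_left _ hpot

end Step

section Run

variable (κ : ℕ → ℕ) (d : ℕ)

noncomputable def run (l : List (SimpleGraph V)) : V → ℕ :=
  l.foldl (step κ d) fun _ => d

variable {κ d} {G : ℕ → SimpleGraph V} {m : ℕ}

theorem run_map_range_succ (t : ℕ) :
    run κ d ((List.range (t + 2)).map G) =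
      step κ d (run κ d ((List.range (t + 1)).map G)) (G (t + 1)) := by
  rw [run, List.range_succ, List.map_append, List.foldl_append]
  rfl

theorem run_map_range_one (hG0 : G 0 = ⊥) :
    run κ d ((List.range 1).map G) = fun _ => d := by
  simp only [run, List.range_one, List.map_cons, List.map_nil, List.foldl_cons, List.foldl_nil,
    hG0]
  rcases step_eq_or κ d (fun _ : V => d) ⊥ with ⟨-, h⟩ | ⟨u, w, huw, -, -⟩
  · exact h
  · exact huw.elim

theorem isProperNat_run_and_inPalette (hd : 1 ≤ d) {C : ℕ} (hG0 : G 0 = ⊥)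
    (hG : ∀ t < m, isStep (G t) (G (t + 1))) (hχ : ∀ t ≤ m, (G t).chromaticNumber.toNat ≤ C) :
    ∀ t ≤ m, IsProperNat (G t) (run κ d ((List.range (t + 1)).map G)) ∧
      InPalette d C (run κ d ((List.range (t + 1)).map G)) := by
  intro t ht
  induction t with
  | zero =>
    rw [run_map_range_one hG0, hG0]
    refine ⟨fun _ _ h => h.elim, fun v => ⟨?_, ?_⟩⟩
    · rw [bucket, Nat.mod_eq_of_lt d.lt_succ_self]
      omega
    · have : Nonempty V := ⟨v⟩
      have : (G 0).chromaticNumber.toNat = 1 := by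
        rw [hG0, SimpleGraph.chromaticNumber_bot]
        rfl
      have := hχ 0 (Nat.zero_le _)
      rw [Nat.div_eq_of_lt d.lt_succ_self]
      omega
  | succ t ih =>
    obtain ⟨hproper, hpalette⟩ := ih (by omega)
    rw [run_map_range_succ]
    exact ⟨isProperNat_step hd hproper (hG t ht), inPalette_step hd hpalette (hχ _ ht)⟩

theorem sum_card_ne_run_le (hd : 1 ≤ d) (hκd : Fintype.card V ≤ κ d)
    (hκ : ∀ i, κ (i + 1) ≤ κ 1 * κ i) (hG0 : G 0 = ⊥) :
    ∑ t ∈ range m, #{v | run κ d ((List.range (t + 1)).map G) v ≠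
        run κ d ((List.range (t + 2)).map G) v} ≤ κ 1 * d * m := by
  have hΦ0 : potential d (run κ d ((List.range 1).map G)) = 0 := by
    rw [run_map_range_one hG0]
    simp [potential, bucket]
  have h := sum_le_of_amortized
    (fun t => #{v | run κ d ((List.range (t + 1)).map G) v ≠
      run κ d ((List.range (t + 2)).map G) v})
    (fun t => κ 1 * potential d (run κ d ((List.range (t + 1)).map G))) (κ 1 * d) m
    fun t _ => by
      rw [run_map_range_succ]
      exact card_ne_step_add_potential_le hd hκd hκ
  rwa [hΦ0, mul_zero, zero_add] at h

end Run

noncomputable def bucketCap (d N i : ℕ) : ℕ := ⌈(N : ℝ) ^ ((i : ℝ) / d)⌉₊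

theorem bucketCap_self {d : ℕ} (hd : 1 ≤ d) (N : ℕ) : bucketCap d N d = N := by
  rw [bucketCap, div_self (by positivity), Real.rpow_one, Nat.ceil_natCast]

theorem bucketCap_succ_le {d : ℕ} (hd : 1 ≤ d) (N i : ℕ) :
    bucketCap d N (i + 1) ≤ bucketCap d N 1 * bucketCap d N i := by
  have hsplit : ((i + 1 : ℕ) : ℝ) / d = ((1 : ℕ) : ℝ) / d + (i : ℝ) / d := by
    push_cast
    ring
  unfold bucketCap
  rw [hsplit, Real.rpow_add' N.cast_nonneg (by rw [← hsplit]; positivity)]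
  exact Nat.ceil_mul_le_mul_ceil (by positivity) (by positivity)

end BigBuckets

theorem bigBuckets_amortized_general (d N : ℕ) (hd : 1 ≤ d) :
    ∃ A : List (SimpleGraph (Fin N)) → (Fin N → ℕ),
      ∀ (m : ℕ) (G : ℕ → SimpleGraph (Fin N)),
        G 0 = ⊥ → (∀ t < m, isStep (G t) (G (t + 1))) →
        (∀ t ≤ m, IsProperNat (G t) (A ((List.range (t + 1)).map G))) ∧
        (∀ t ≤ m, ∀ v : Fin N,
          1 ≤ A ((List.range (t + 1)).map G) v ∧
          A ((List.range (t + 1)).map G) v ≤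
            (d + 1) * ((Finset.range (m + 1)).sup fun t => ((G t).chromaticNumber).toNat)) ∧
        (∑ t ∈ Finset.range m,
            recount (A ((List.range (t + 1)).map G)) (A ((List.range (t + 2)).map G)))
          ≤ (d + 1) * ⌈(N : ℝ) ^ ((1 : ℝ) / d)⌉₊ * m := by
  have hκd : Fintype.card (Fin N) ≤ BigBuckets.bucketCap d N d := by
    rw [Fintype.card_fin, BigBuckets.bucketCap_self hd]
  refine ⟨BigBuckets.run (BigBuckets.bucketCap d N) d, fun m G hG0 hG => ?_⟩
  have hχ (t : ℕ) (ht : t ≤ m) : (G t).chromaticNumber.toNat ≤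
      (Finset.range (m + 1)).sup fun t => (G t).chromaticNumber.toNat :=
    Finset.le_sup (f := fun t => (G t).chromaticNumber.toNat) (by simpa [Nat.lt_succ_iff])
  have hinv :=
    BigBuckets.isProperNat_run_and_inPalette (κ := BigBuckets.bucketCap d N) hd hG0 hG hχ
  refine ⟨fun t ht => (hinv t ht).1, fun t ht v => ⟨(hinv t ht).2.one_le v,
    (hinv t ht).2.le_mul v⟩, ?_⟩
  calc _ ≤ BigBuckets.bucketCap d N 1 * d * m :=
        BigBuckets.sum_card_ne_run_le hd hκd (BigBuckets.bucketCap_succ_le hd N) hG0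
    _ ≤ (d + 1) * ⌈(N : ℝ) ^ ((1 : ℝ) / d)⌉₊ * m := by
        rw [BigBuckets.bucketCap, Nat.cast_one, mul_comm (d + 1)]
        gcongr
        omega

/-- The big-buckets algorithm: an `O(d)`-competitive recoloring algorithm with
`O(d·N^{1/d})` amortized recolorings per update. -/
theorem bigBuckets_amortized (d N : ℕ) (hd : 1 ≤ d) (hN : 1 ≤ N) :
    ∃ A : List (SimpleGraph (Fin N)) → (Fin N → ℕ),
      ∀ (m : ℕ) (G : ℕ → SimpleGraph (Fin N)),
        G 0 = ⊥ → (∀ t < m, isStep (G t) (G (t + 1))) →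
        (∀ t ≤ m, IsProperNat (G t) (A ((List.range (t + 1)).map G))) ∧
        (∀ t ≤ m, ∀ v : Fin N,
          1 ≤ A ((List.range (t + 1)).map G) v ∧
          A ((List.range (t + 1)).map G) v ≤
            (d + 1) * ((Finset.range (m + 1)).sup fun t => ((G t).chromaticNumber).toNat)) ∧
        (∑ t ∈ Finset.range m,
            recount (A ((List.range (t + 1)).map G)) (A ((List.range (t + 2)).map G)))
          ≤ (d + 1) * ⌈(N : ℝ) ^ ((1 : ℝ) / d)⌉₊ * m :=
  bigBuckets_amortized_general d N hd
end

section
/- Let L ≥ 1 and let G be the simple graph consisting of two vertex-disjoint stars with roots r₁ and r₂, each with L leaves, together with the additional edge {r₁, r₂}. Let f : V(G) → {1,2} be a coloring that is a proper coloring of each of the two stars and satisfies f(r₁) = f(r₂). Then every proper 2-coloring g : V(G) → {1,2} of G satisfies |{v ∈ V(G) : g(v) ≠ f(v)}| ≥ L + 1. -/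
/-!
Since `f` agrees on the two roots while `g` separates them, `g` disagrees with `f` at one of
the roots. With only two colours, a disagreement between two proper colourings propagates
along every edge, so `g` disagrees with `f` on that root together with all of its `L` leaves.
-/

/-- Two vertex-disjoint stars on `Fin (2*L+2)`: the first has root `0` and leaves
`1,…,L`; the second has root `L+1` and leaves `L+2,…,2L+1`. -/
def twoStars (L : ℕ) : SimpleGraph (Fin (2 * L + 2)) :=
  SimpleGraph.fromRel fun u v =>
    (u.val = 0 ∧ 1 ≤ v.val ∧ v.val ≤ L) ∨ (u.val = L + 1 ∧ L + 2 ≤ v.val)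

/-- The two stars together with the edge linking their roots. -/
def twoStarsLinked (L : ℕ) : SimpleGraph (Fin (2 * L + 2)) :=
  twoStars L ⊔
    SimpleGraph.fromEdgeSet
      {s((⟨0, by omega⟩ : Fin (2 * L + 2)), (⟨L + 1, by omega⟩ : Fin (2 * L + 2)))}

open Finset

section TwoValued

variable {V : Type*} {G : SimpleGraph V} {f g : V → ℕ}

lemma ne_iff_ne_of_adj_of_two_valued (hf2 : ∀ v, f v = 1 ∨ f v = 2)
    (hg2 : ∀ v, g v = 1 ∨ g v = 2) (hf : ∀ u v, G.Adj u v → f u ≠ f v)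
    (hg : ∀ u v, G.Adj u v → g u ≠ g v) {u v : V} (huv : G.Adj u v) :
    g u ≠ f u ↔ g v ≠ f v := by
  have := hf u v huv
  have := hg u v huv
  rcases hf2 u with _ | _ <;> rcases hf2 v with _ | _ <;>
    rcases hg2 u with _ | _ <;> rcases hg2 v with _ | _ <;> omega

lemma card_le_card_filter_ne_of_forall_eq_or_adj [Fintype V]
    (hf2 : ∀ v, f v = 1 ∨ f v = 2) (hg2 : ∀ v, g v = 1 ∨ g v = 2)
    (hf : ∀ u v, G.Adj u v → f u ≠ f v) (hg : ∀ u v, G.Adj u v → g u ≠ g v)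
    (r : V) (s : Finset V) (hr : g r ≠ f r) (hs : ∀ v ∈ s, v = r ∨ G.Adj r v) :
    #s ≤ #(univ.filter fun v => g v ≠ f v) := by
  refine card_le_card fun v hv => mem_filter.2 ⟨mem_univ v, ?_⟩
  rcases hs v hv with rfl | hrv
  · exact hr
  · exact (ne_iff_ne_of_adj_of_two_valued hf2 hg2 hf hg hrv).1 hr

end TwoValued

section TwoStars

variable {L : ℕ}

lemma eq_or_twoStars_adj_of_le {v : Fin (2 * L + 2)} (hv : v.val ≤ L) :
    v = ⟨0, by omega⟩ ∨ (twoStars L).Adj ⟨0, by omega⟩ v := by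
  rcases Nat.eq_zero_or_pos v.val with h | h
  · exact .inl (Fin.ext h)
  · refine .inr ((SimpleGraph.fromRel_adj _ _ _).2 ⟨?_, .inl (.inl ⟨rfl, h, hv⟩)⟩)
    exact fun h' => h.ne (congrArg Fin.val h')

lemma eq_or_twoStars_adj_of_ge {v : Fin (2 * L + 2)} (hv : L + 1 ≤ v.val) :
    v = ⟨L + 1, by omega⟩ ∨ (twoStars L).Adj ⟨L + 1, by omega⟩ v := by
  rcases hv.eq_or_lt with h | h
  · exact .inl (Fin.ext h.symm)
  · refine .inr ((SimpleGraph.fromRel_adj _ _ _).2 ⟨?_, .inl (.inr ⟨rfl, h⟩)⟩)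
    exact fun h' => h.ne (congrArg Fin.val h')

lemma twoStarsLinked_adj_roots (L : ℕ) :
    (twoStarsLinked L).Adj ⟨0, by omega⟩ ⟨L + 1, by omega⟩ :=
  .inr ((SimpleGraph.fromEdgeSet_adj _).2 ⟨rfl, by simp [Fin.ext_iff]⟩)

end TwoStars

/-- A matching link forces many recolorings: if `f` properly 2-colors each of the two
stars and gives both roots the same color, then any proper 2-coloring `g` of the linked
graph differs from `f` on at least `L + 1` vertices. -/
theorem matching_link_recolorings (L : ℕ)
    (f g : Fin (2 * L + 2) → ℕ)
    (hf2 : ∀ v, f v = 1 ∨ f v = 2)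
    (hfproper : ∀ u v, (twoStars L).Adj u v → f u ≠ f v)
    (hroots : f ⟨0, by omega⟩ = f ⟨L + 1, by omega⟩)
    (hg2 : ∀ v, g v = 1 ∨ g v = 2)
    (hgproper : ∀ u v, (twoStarsLinked L).Adj u v → g u ≠ g v) :
    L + 1 ≤ (Finset.univ.filter fun v => g v ≠ f v).card := by
  have hg : ∀ u v, (twoStars L).Adj u v → g u ≠ g v :=
    fun u v h => hgproper u v ((le_sup_left : twoStars L ≤ twoStarsLinked L) h)
  have hbound := card_le_card_filter_ne_of_forall_eq_or_adj hf2 hg2 hfproper hg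
  have hroot : g ⟨0, by omega⟩ ≠ f ⟨0, by omega⟩ ∨
      g ⟨L + 1, by omega⟩ ≠ f ⟨L + 1, by omega⟩ := by
    by_contra! h
    exact hgproper _ _ (twoStarsLinked_adj_roots L) (by rw [h.1, h.2, hroots])
  rcases hroot with h | h
  · calc L + 1 = #(Iic (⟨L, by omega⟩ : Fin (2 * L + 2))) := by rw [Fin.card_Iic]
      _ ≤ _ := hbound _ _ h fun v hv =>
        eq_or_twoStars_adj_of_le (by simpa [Fin.le_iff_val_le_val] using hv)
  · calc L + 1 = #(Ici (⟨L + 1, by omega⟩ : Fin (2 * L + 2))) := by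
          rw [Fin.card_Ici, Fin.val_mk]; omega
      _ ≤ _ := hbound _ _ h fun v hv =>
        eq_or_twoStars_adj_of_ge (by simpa [Fin.le_iff_val_le_val] using hv)
end

section
/- Let c ≥ 2 be an integer, n ≥ 1 an integer, and α > 0 a real number, and for 0 ≤ k ≤ c − 1 define T_k = (α / (4c)^k) · n^{1 − Σ_{i=1}^{k} 2(c−i)/(c(c−1))} (real exponentiation). Then for all integers 0 ≤ j ≤ k ≤ c − 1, T_j ≤ Σ_{i=j}^{k} T_i ≤ 2·T_j. (Hence the number of edge insertions Θ(Σ_{i=j}^{k} T_i) needed to construct a k-configuration from a j-configuration is Θ(T_j).) -/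
/-- The geometric decay of the configuration sizes `T_k`: the total size
`Σ_{i=j}^{k} T_i` is between `T_j` and `2·T_j`. -/
theorem configuration_sizes_geometric (c n : ℕ) (hc : 2 ≤ c) (hn : 1 ≤ n)
    (α : ℝ) (hα : 0 < α) (T : ℕ → ℝ)
    (hT : ∀ k, T k = (α / (4 * (c : ℝ)) ^ k) *
      (n : ℝ) ^ (1 - ∑ i ∈ Finset.Icc 1 k,
        2 * ((c : ℝ) - (i : ℝ)) / ((c : ℝ) * ((c : ℝ) - 1)))) :
    ∀ j k : ℕ, j ≤ k → k ≤ c - 1 →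
      T j ≤ ∑ i ∈ Finset.Icc j k, T i ∧ ∑ i ∈ Finset.Icc j k, T i ≤ 2 * T j := by
  have hc' : (2:ℝ) ≤ (c:ℝ) := by exact_mod_cast hc
  have hn' : (1:ℝ) ≤ (n:ℝ) := by exact_mod_cast hn
  have hn0 : (0:ℝ) < (n:ℝ) := by linarith
  have h4c : (0:ℝ) < 4 * (c:ℝ) := by linarith
  have hpos : ∀ i, 0 < T i := by
    intro i
    rw [hT i]
    exact mul_pos (div_pos hα (pow_pos h4c i)) (Real.rpow_pos_of_pos hn0 _)
  have hhalf : ∀ j, j + 1 ≤ c - 1 → T (j+1) ≤ T j / 2 := by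
    intro j hj
    have hjc : j + 2 ≤ c := by omega
    have hjc' : (j:ℝ) + 2 ≤ (c:ℝ) := by exact_mod_cast hjc
    set S := ∑ i ∈ Finset.Icc 1 j,
        2 * ((c : ℝ) - (i : ℝ)) / ((c : ℝ) * ((c : ℝ) - 1)) with hS
    set a := 2 * ((c:ℝ) - ((j:ℝ)+1)) / ((c:ℝ) * ((c:ℝ) - 1)) with ha
    have ha0 : 0 ≤ a := by
      apply div_nonneg
      · nlinarith
      · nlinarith
    have hsum : ∑ i ∈ Finset.Icc 1 (j+1),
        2 * ((c : ℝ) - (i : ℝ)) / ((c : ℝ) * ((c : ℝ) - 1)) = S + a := by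
      rw [Finset.sum_Icc_succ_top (by omega : 1 ≤ j+1)]
      push_cast
      ring
    have hexp : (n:ℝ) ^ (1 - (S + a)) ≤ (n:ℝ) ^ (1 - S) :=
      Real.rpow_le_rpow_of_exponent_le hn' (by linarith)
    have hX : 0 < (n:ℝ) ^ (1 - S) := Real.rpow_pos_of_pos hn0 _
    rw [hT (j+1), hT j, hsum]
    have h1 : (α / (4 * (c : ℝ)) ^ (j+1)) * (n:ℝ) ^ (1 - (S + a))
        ≤ (α / (4 * (c : ℝ)) ^ (j+1)) * (n:ℝ) ^ (1 - S) := by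
      apply mul_le_mul_of_nonneg_left hexp
      positivity
    refine h1.trans ?_
    have hpow : (4 * (c:ℝ)) ^ (j+1) = (4 * (c:ℝ)) ^ j * (4 * (c:ℝ)) := pow_succ _ _
    have hp : (0:ℝ) < (4 * (c:ℝ)) ^ j := pow_pos h4c j
    rw [hpow, div_mul_eq_div_div]
    have hTj : 0 < α / (4 * (c:ℝ)) ^ j * (n:ℝ) ^ (1 - S) :=
      mul_pos (div_pos hα hp) hX
    rw [div_mul_eq_mul_div]
    rw [div_le_div_iff₀ h4c (by norm_num : (0:ℝ) < 2)]
    nlinarith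
  have claim : ∀ d j, j + d ≤ c - 1 →
      ∑ i ∈ Finset.Icc j (j+d), T i ≤ (2 - (1/2:ℝ)^d) * T j := by
    intro d
    induction d with
    | zero =>
      intro j _
      simp only [Nat.add_zero, Finset.Icc_self, Finset.sum_singleton]
      norm_num
    | succ d ih =>
      intro j hj
      have hins : Finset.Icc j (j+(d+1)) = insert j (Finset.Icc (j+1) (j+1+d)) := by
        ext x
        simp only [Finset.mem_Icc, Finset.mem_insert]
        omega
      rw [hins, Finset.sum_insert (by simp only [Finset.mem_Icc]; omega)]
      have h2 := ih (j+1) (by omega)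
      have h3 := hhalf j (by omega)
      have h4 : (0:ℝ) ≤ 2 - (1/2:ℝ)^d := by
        have : (1/2:ℝ)^d ≤ 1 := pow_le_one₀ (by norm_num) (by norm_num)
        linarith
      have h5 : (2 - (1/2:ℝ)^d) * T (j+1) ≤ (2 - (1/2:ℝ)^d) * (T j / 2) :=
        mul_le_mul_of_nonneg_left h3 h4
      have hTj := hpos j
      have : (2 - (1/2:ℝ)^d) * (T j / 2) = (1 - (1/2:ℝ)^(d+1)) * T j := by
        rw [pow_succ]
        ring
      linarith
  intro j k hjk hk
  constructor
  · apply Finset.single_le_sum (f := T) (fun i _ => (hpos i).le)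
    simp [Finset.mem_Icc, hjk]
  · have hd := claim (k - j) j (by omega)
    rw [show j + (k - j) = k by omega] at hd
    have : (0:ℝ) ≤ (1/2:ℝ)^(k-j) * T j := mul_nonneg (by positivity) (hpos j).le
    nlinarith [hpos j]
end
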